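/- Every integer N has exactly one far-difference representation (the representation of 0 being the empty one, P = M = ∅). Moreover, for every n ≥ 1 and every integer N with S_{n−1} < N ≤ S_n, the largest index appearing in the far-difference representation of N is n, and it appears with positive sign (i.e., n ∈ P). -/
import Mathlib


/-- `F n` is the Fibonacci number in the convention `F 1 = 1, F 2 = 2`,
`F (n+1) = F n + F (n-1)`, i.e. `F n = fib (n+1)`. -/
def F (n : ℕ) : ℕ := Nat.fib (n + 1)

/-- A far-difference representation of an integer `N`: disjoint finite sets
`P, M` of positive indices with `N = ∑_{i∈P} F i − ∑_{j∈M} F j`, where any two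
distinct indices of the same sign differ by at least `4` and any two indices of
opposite signs differ by at least `3`. -/
def IsFarDiff (N : ℤ) (P M : Finset ℕ) : Prop :=
  (∀ i ∈ P, 1 ≤ i) ∧ (∀ j ∈ M, 1 ≤ j) ∧ Disjoint P M ∧
  (∀ i ∈ P, ∀ j ∈ P, i ≠ j → 4 ≤ |(i : ℤ) - (j : ℤ)|) ∧
  (∀ i ∈ M, ∀ j ∈ M, i ≠ j → 4 ≤ |(i : ℤ) - (j : ℤ)|) ∧
  (∀ i ∈ P, ∀ j ∈ M, 3 ≤ |(i : ℤ) - (j : ℤ)|) ∧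
  (∑ i ∈ P, (F i : ℤ)) - (∑ j ∈ M, (F j : ℤ)) = N

/-- `S n = F n + F (n-4) + F (n-8) + ⋯` (the sum of `F (n - 4i)` over `i ≥ 0`
with `n - 4i > 0`) for `n > 0`, and `S n = 0` for `n ≤ 0`. -/
def S (n : ℕ) : ℕ := ∑ i ∈ Finset.range ((n + 3) / 4), F (n - 4 * i)

lemma F_pos (n : ℕ) : 1 ≤ F n := Nat.fib_pos.2 (Nat.succ_pos n)

lemma F_add_two (n : ℕ) : F (n + 2) = F (n + 1) + F n := by
  simp [F, Nat.fib_add_two]; omega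

lemma F_mono : Monotone F := fun a b h => Nat.fib_mono (by omega)

lemma F_ge (n : ℕ) : n ≤ F n := by
  induction n with
  | zero => simp [F]
  | succ k ih =>
    cases k with
    | zero => simp [F]
    | succ m =>
      have h1 := F_pos m
      have h2 : F (m + 1 + 1) = F (m + 1) + F m := F_add_two m
      omega

lemma S_zero : S 0 = 0 := by simp [S]

lemma S_rec (n : ℕ) : S (n + 1) = F (n + 1) + S (n - 3) := by
  rcases Nat.lt_or_ge n 3 with h | h
  · interval_cases n <;> simp [S, F, Finset.sum_range_succ]
  · obtain ⟨m, rfl⟩ := Nat.exists_eq_add_of_le h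
    have h1 : (3 + m + 1 + 3) / 4 = (m + 3) / 4 + 1 := by omega
    have h2 : 3 + m - 3 = m := by omega
    rw [S, S, h1, h2, Finset.sum_range_succ']
    simp only [Nat.mul_zero, Nat.sub_zero]
    rw [add_comm]
    congr 1
    exact Finset.sum_congr rfl (fun i _ => by congr 1; omega)

lemma S_rec' (n : ℕ) (h : 1 ≤ n) : S n = F n + S (n - 4) := by
  obtain ⟨m, rfl⟩ := Nat.exists_eq_add_of_le h
  have h2 : m + 1 - 4 = m - 3 := by omega
  rw [show 1 + m = m + 1 by omega, h2]
  exact S_rec m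

lemma S_mono : Monotone S := by
  have key : ∀ n, S n ≤ S (n + 1) := by
    intro n
    induction n using Nat.strong_induction_on with
    | _ n ih =>
      rcases Nat.lt_or_ge n 4 with h | h
      · interval_cases n <;> decide
      · obtain ⟨m, rfl⟩ := Nat.exists_eq_add_of_le h
        have e1 : S (4 + m) = F (4 + m) + S m := by
          have := S_rec' (4 + m) (by omega); rwa [show 4 + m - 4 = m by omega] at this
        have e2 : S (4 + m + 1) = F (4 + m + 1) + S (m + 1) := by
          have := S_rec' (4 + m + 1) (by omega); rwa [show 4 + m + 1 - 4 = m + 1 by omega] at this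
        have h3 : S m ≤ S (m + 1) := ih m (by omega)
        have h4 : F (4 + m) ≤ F (4 + m + 1) := F_mono (by omega)
        omega
  exact monotone_nat_of_le_succ key

lemma key3 (n : ℕ) : F (n + 3) = S (n + 2) + S n + 1 := by
  induction n using Nat.strong_induction_on with
  | _ n ih =>
    match n, ih with
    | 0, _ => decide
    | 1, _ => decide
    | (m+2), ih =>
      show F (m + 5) = S (m + 4) + S (m + 2) + 1
      have h1 := ih m (by omega)
      have h2 : F (m + 5) = F (m + 4) + F (m + 3) := F_add_two (m + 3)
      have e1 : S (m + 4) = F (m + 4) + S m := by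
        have := S_rec' (m + 4) (by omega); rwa [show m + 4 - 4 = m by omega] at this
      omega

lemma keyF (n : ℕ) (h : 1 ≤ n) : F n = S (n - 1) + S (n - 3) + 1 := by
  rcases Nat.lt_or_ge n 3 with h' | h'
  · interval_cases n <;> decide
  · obtain ⟨m, rfl⟩ := Nat.exists_eq_add_of_le h'
    rw [show 3 + m = m + 3 by omega, show m + 3 - 1 = m + 2 by omega,
      show m + 3 - 3 = m by omega]
    exact key3 m

lemma abs_gap4 {i n : ℕ} (hle : i ≤ n) (h : 4 ≤ |(i:ℤ) - (n:ℤ)|) : i + 4 ≤ n := by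
  rcases abs_cases ((i:ℤ) - (n:ℤ)) with ⟨he, _⟩ | ⟨he, _⟩ <;> (rw [he] at h; omega)

lemma abs_gap3 {i n : ℕ} (hle : i ≤ n) (h : 3 ≤ |(i:ℤ) - (n:ℤ)|) : i + 3 ≤ n := by
  rcases abs_cases ((i:ℤ) - (n:ℤ)) with ⟨he, _⟩ | ⟨he, _⟩ <;> (rw [he] at h; omega)

lemma sumP (n : ℕ) (P : Finset ℕ)
    (h0 : ∀ i ∈ P, 1 ≤ i) (hle : ∀ i ∈ P, i ≤ n)
    (h4 : ∀ i ∈ P, ∀ j ∈ P, i ≠ j → 4 ≤ |(i : ℤ) - (j : ℤ)|) :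
    ∑ i ∈ P, F i ≤ S n := by
  induction n using Nat.strong_induction_on generalizing P with
  | _ n ih =>
    by_cases hP : P = ∅
    · simp [hP]
    · by_cases hn : n ∈ P
      · have hn1 : 1 ≤ n := h0 n hn
        have step : ∑ i ∈ P.erase n, F i ≤ S (n - 4) := by
          apply ih (n - 4) (by omega)
          · exact fun i hi => h0 i (Finset.mem_of_mem_erase hi)
          · intro i hi
            have hne := Finset.ne_of_mem_erase hi
            have hmem := Finset.mem_of_mem_erase hi
            have h4' := h4 i hmem n hn hne
            have hli := hle i hmem
            have := abs_gap4 hli h4'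
            omega
          · exact fun i hi j hj hij =>
              h4 i (Finset.mem_of_mem_erase hi) j (Finset.mem_of_mem_erase hj) hij
        have := Finset.add_sum_erase P F hn
        have := S_rec' n hn1
        omega
      · -- all elements ≤ n - 1, and n ≥ 1 since P nonempty with elements ≥ 1
        obtain ⟨a, ha⟩ := Finset.nonempty_iff_ne_empty.2 hP
        have ha1 := h0 a ha
        have han := hle a ha
        have hn1 : 1 ≤ n := le_trans ha1 han
        have : ∑ i ∈ P, F i ≤ S (n - 1) := by
          apply ih (n - 1) (by omega) P h0 _ h4
          intro i hi
          have := hle i hi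
          have : i ≠ n := fun h => hn (h ▸ hi)
          omega
        exact le_trans this (S_mono (by omega))

lemma neg_swap {N : ℤ} {P M : Finset ℕ} (h : IsFarDiff N P M) : IsFarDiff (-N) M P := by
  obtain ⟨h1, h2, h3, h4, h5, h6, h7⟩ := h
  refine ⟨h2, h1, h3.symm, h5, h4, ?_, by linarith⟩
  intro i hi j hj
  have := h6 j hj i hi
  rw [abs_sub_comm] at this
  exact this

lemma bound {N : ℤ} {P M : Finset ℕ} (h : IsFarDiff N P M) (n : ℕ) (hn : n ∈ P)
    (hmax : ∀ i ∈ P ∪ M, i ≤ n) :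
    ((S (n - 1) : ℤ) < N ∧ N ≤ (S n : ℤ)) := by
  obtain ⟨h1, h2, h3, h4, h5, h6, h7⟩ := h
  have hn1 : 1 ≤ n := h1 n hn
  have hPle : ∑ i ∈ P, F i ≤ S n :=
    sumP n P h1 (fun i hi => hmax i (Finset.mem_union_left _ hi)) h4
  have hMle : ∑ j ∈ M, F j ≤ S (n - 3) := by
    apply sumP (n - 3) M h2 _ h5
    intro j hj
    have hjn := hmax j (Finset.mem_union_right _ hj)
    have hne : n ≠ j := fun e => (Finset.disjoint_left.1 h3 hn (e ▸ hj))
    have h6' := h6 n hn j hj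
    rw [abs_sub_comm] at h6'
    have := abs_gap3 hjn h6'
    omega
  have hFn : (F n : ℤ) ≤ ∑ i ∈ P, (F i : ℤ) := by
    apply Finset.single_le_sum (f := fun i => (F i : ℤ)) _ hn
    intro i _; positivity
  have hM0 : (0 : ℤ) ≤ ∑ j ∈ M, (F j : ℤ) := by positivity
  have hkey := keyF n hn1
  have hPc : (∑ i ∈ P, (F i : ℤ)) = ((∑ i ∈ P, F i : ℕ) : ℤ) := by push_cast; ring
  have hMc : (∑ j ∈ M, (F j : ℤ)) = ((∑ j ∈ M, F j : ℕ) : ℤ) := by push_cast; ring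
  constructor
  · have : (F n : ℤ) - (S (n - 3) : ℤ) ≤ N := by
      rw [← h7]
      have : ((∑ j ∈ M, F j : ℕ) : ℤ) ≤ (S (n - 3) : ℤ) := by exact_mod_cast hMle
      rw [hMc]
      linarith
    have hkeyZ : (F n : ℤ) = (S (n-1) : ℤ) + (S (n-3) : ℤ) + 1 := by exact_mod_cast hkey
    linarith
  · rw [← h7]
    have : ((∑ i ∈ P, F i : ℕ) : ℤ) ≤ (S n : ℤ) := by exact_mod_cast hPle
    rw [hPc]
    linarith

lemma topSign {N : ℤ} {P M : Finset ℕ} (h : IsFarDiff N P M) (hN : 0 < N) :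
    ∃ n ∈ P, (∀ i ∈ P ∪ M, i ≤ n) ∧ (S (n-1) : ℤ) < N ∧ N ≤ (S n : ℤ) := by
  have hne : (P ∪ M).Nonempty := by
    rw [Finset.nonempty_iff_ne_empty]
    intro he
    have hPe : P = ∅ := by
      have := Finset.union_eq_empty.1 he; exact this.1
    have hMe : M = ∅ := (Finset.union_eq_empty.1 he).2
    have := h.2.2.2.2.2.2
    rw [hPe, hMe] at this
    simp at this
    omega
  set n := (P ∪ M).max' hne with hn
  have hmax : ∀ i ∈ P ∪ M, i ≤ n := fun i hi => Finset.le_max' _ i hi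
  have hnmem : n ∈ P ∪ M := Finset.max'_mem _ hne
  rcases Finset.mem_union.1 hnmem with hp | hm
  · exact ⟨n, hp, hmax, bound h n hp hmax⟩
  · exfalso
    have h' := neg_swap h
    have hmax' : ∀ i ∈ M ∪ P, i ≤ n := fun i hi => hmax i (by
      rcases Finset.mem_union.1 hi with a | b
      · exact Finset.mem_union_right _ a
      · exact Finset.mem_union_left _ b)
    have hb := bound h' n hm hmax'
    have : (0:ℤ) ≤ (S (n-1) : ℤ) := by positivity
    linarith [hb.1]

lemma n_det {m n : ℕ} {N : ℤ} (hm1 : (S (m-1) : ℤ) < N) (hm2 : N ≤ (S m : ℤ))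
    (hn1 : (S (n-1) : ℤ) < N) (hn2 : N ≤ (S n : ℤ)) : m = n := by
  by_contra hne
  rcases Nat.lt_or_ge m n with h | h
  · have h' : S m ≤ S (n-1) := S_mono (by omega)
    have : (S m : ℤ) ≤ (S (n-1) : ℤ) := by exact_mod_cast h'
    linarith
  · have h' : S n ≤ S (m-1) := S_mono (by omega)
    have : (S n : ℤ) ≤ (S (m-1) : ℤ) := by exact_mod_cast h'
    linarith

lemma zero_unique {P M : Finset ℕ} (h : IsFarDiff 0 P M) : P = ∅ ∧ M = ∅ := by
  by_cases hPM : P ∪ M = ∅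
  · exact ⟨(Finset.union_eq_empty.1 hPM).1, (Finset.union_eq_empty.1 hPM).2⟩
  · exfalso
    have hne : (P ∪ M).Nonempty := Finset.nonempty_iff_ne_empty.2 hPM
    set n := (P ∪ M).max' hne with hndef
    have hmax : ∀ i ∈ P ∪ M, i ≤ n := fun i hi => Finset.le_max' _ i hi
    have hS : (0:ℤ) ≤ (S (n-1) : ℤ) := by positivity
    rcases Finset.mem_union.1 (Finset.max'_mem _ hne) with hp | hm
    · have hb := bound h n hp hmax
      linarith [hb.1]
    · have h' : IsFarDiff 0 M P := by have := neg_swap h; rwa [neg_zero] at this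
      have hmax' : ∀ i ∈ M ∪ P, i ≤ n := fun i hi => hmax i (by
        rcases Finset.mem_union.1 hi with a | b
        · exact Finset.mem_union_right _ a
        · exact Finset.mem_union_left _ b)
      have hb := bound h' n hm hmax'
      linarith [hb.1]

lemma exists_n (N : ℤ) (hN : 0 < N) : ∃ n, 1 ≤ n ∧ (S (n-1) : ℤ) < N ∧ N ≤ (S n : ℤ) := by
  have hex : ∃ k, N ≤ (S k : ℤ) := by
    refine ⟨N.toNat, ?_⟩
    have h1 : 1 ≤ N.toNat := by omega
    have h2 : N.toNat ≤ F N.toNat := F_ge _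
    have h3 : F N.toNat ≤ S N.toNat := by
      have := S_rec' N.toNat h1; omega
    have : N.toNat ≤ S N.toNat := le_trans h2 h3
    omega
  classical
  set n := Nat.find hex with hndef
  have hn2 : N ≤ (S n : ℤ) := Nat.find_spec hex
  have hn1 : 1 ≤ n := by
    rcases Nat.eq_zero_or_pos n with h0 | h
    · exact absurd (h0 ▸ hn2) (by rw [S_zero]; push_cast; linarith)
    · exact h
  have hn3 : (S (n-1) : ℤ) < N := by
    have := Nat.find_min hex (show n - 1 < n by omega)
    push_neg at this
    exact this
  exact ⟨n, hn1, hn3, hn2⟩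

lemma le_abs_gap {a b : ℕ} {k : ℤ} (h : b + k.toNat ≤ a) (hk : 0 ≤ k) :
    k ≤ |(a : ℤ) - (b : ℤ)| := by
  rw [le_abs]
  left
  omega

lemma pos_step (N : ℤ) (hN : 0 < N)
    (IH : ∀ N' : ℤ, N'.natAbs < N.natAbs →
      ∃! PM : Finset ℕ × Finset ℕ, IsFarDiff N' PM.1 PM.2) :
    ∃! PM : Finset ℕ × Finset ℕ, IsFarDiff N PM.1 PM.2 := by
  obtain ⟨n, hn1, hlow, hup⟩ := exists_n N hN
  set N' := N - (F n : ℤ) with hN'def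
  have hSrec : (S n : ℤ) = (F n : ℤ) + (S (n-4) : ℤ) := by exact_mod_cast S_rec' n hn1
  have hkeyZ : (F n : ℤ) = (S (n-1) : ℤ) + (S (n-3) : ℤ) + 1 := by exact_mod_cast keyF n hn1
  have hub : N' ≤ (S (n-4) : ℤ) := by linarith
  have hlb : -(S (n-3) : ℤ) ≤ N' := by linarith
  have hmono34 : (S (n-4) : ℤ) ≤ (S (n-3) : ℤ) := by exact_mod_cast S_mono (show n-4 ≤ n-3 by omega)
  have hmono31 : (S (n-3) : ℤ) ≤ (S (n-1) : ℤ) := by exact_mod_cast S_mono (show n-3 ≤ n-1 by omega)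
  have hNabs : (N.natAbs : ℤ) = N := Int.natAbs_of_nonneg (le_of_lt hN)
  have hlt : N'.natAbs < N.natAbs := by
    have h1 : (N'.natAbs : ℤ) ≤ (S (n-3) : ℤ) := by
      rw [← Int.abs_eq_natAbs, abs_le]
      exact ⟨hlb, le_trans hub hmono34⟩
    have : (N'.natAbs : ℤ) < (N.natAbs : ℤ) := by rw [hNabs]; linarith
    exact_mod_cast this
  obtain ⟨⟨P', M'⟩, hrep', huniq'⟩ := IH N' hlt
  simp only at hrep' huniq'
  -- bounds on elements of P', M'
  have hbounds : (∀ i ∈ P', i + 4 ≤ n) ∧ (∀ j ∈ M', j + 3 ≤ n) := by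
    rcases lt_trichotomy N' 0 with hneg | hzero | hpos
    · -- N' < 0 : top index in M'
      have h'' := neg_swap hrep'
      obtain ⟨m, hmM, hmmax, hml, hmu⟩ := topSign h'' (by linarith)
      have hm3 : m + 3 ≤ n := by
        by_contra hc
        push_neg at hc
        have : S (n-3) ≤ S (m-1) := S_mono (by omega)
        have : (S (n-3) : ℤ) ≤ (S (m-1) : ℤ) := by exact_mod_cast this
        linarith
      constructor
      · intro i hi
        have him : i ≤ m := hmmax i (Finset.mem_union_right _ hi)
        have hne : i ≠ m := fun e => Finset.disjoint_left.1 hrep'.2.2.1 (e ▸ hi) hmM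
        have h3 := hrep'.2.2.2.2.2.1 i hi m hmM
        have := abs_gap3 him h3
        omega
      · intro j hj
        have := hmmax j (Finset.mem_union_left _ hj)
        omega
    · -- N' = 0 : P' = M' = ∅
      rw [hzero] at hrep'
      obtain ⟨he1, he2⟩ := zero_unique hrep'
      constructor
      · intro i hi; rw [he1] at hi; exact absurd hi (Finset.notMem_empty i)
      · intro j hj; rw [he2] at hj; exact absurd hj (Finset.notMem_empty j)
    · -- N' > 0 : top index in P'
      obtain ⟨m, hmP, hmmax, hml, hmu⟩ := topSign hrep' hpos
      have hm4 : m + 4 ≤ n := by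
        by_contra hc
        push_neg at hc
        have : S (n-4) ≤ S (m-1) := S_mono (by omega)
        have : (S (n-4) : ℤ) ≤ (S (m-1) : ℤ) := by exact_mod_cast this
        linarith
      constructor
      · intro i hi
        have := hmmax i (Finset.mem_union_left _ hi)
        omega
      · intro j hj
        have := hmmax j (Finset.mem_union_right _ hj)
        omega
  obtain ⟨hP'le, hM'le⟩ := hbounds
  have hnotinP' : n ∉ P' := fun h => by have := hP'le n h; omega
  have hnotinM' : n ∉ M' := fun h => by have := hM'le n h; omega
  obtain ⟨a1, a2, a3, a4, a5, a6, a7⟩ := hrep'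
  refine ⟨(insert n P', M'), ?_, ?_⟩
  · refine ⟨?_, a2, ?_, ?_, a5, ?_, ?_⟩
    · intro i hi
      rcases Finset.mem_insert.1 hi with rfl | h
      · exact hn1
      · exact a1 i h
    · rw [Finset.disjoint_insert_left]
      exact ⟨hnotinM', a3⟩
    · intro i hi j hj hij
      rcases Finset.mem_insert.1 hi with rfl | hi'
      · rcases Finset.mem_insert.1 hj with rfl | hj'
        · exact absurd rfl hij
        · exact le_abs_gap (k := 4) (hP'le j hj') (by norm_num)
      · rcases Finset.mem_insert.1 hj with rfl | hj'
        · rw [abs_sub_comm]; exact le_abs_gap (k := 4) (hP'le i hi') (by norm_num)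
        · exact a4 i hi' j hj' hij
    · intro i hi j hj
      rcases Finset.mem_insert.1 hi with rfl | hi'
      · exact le_abs_gap (k := 3) (hM'le j hj) (by norm_num)
      · exact a6 i hi' j hj
    · rw [Finset.sum_insert hnotinP']
      simp only
      linarith
  · rintro ⟨P, M⟩ hPM
    simp only at hPM
    obtain ⟨m, hmP, hmmax, hml, hmu⟩ := topSign hPM hN
    have hmn : m = n := n_det hml hmu hlow hup
    subst hmn
    obtain ⟨b1, b2, b3, b4, b5, b6, b7⟩ := hPM
    have herase : IsFarDiff N' (P.erase m) M := by
      refine ⟨fun i hi => b1 i (Finset.mem_of_mem_erase hi), b2,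
        Finset.disjoint_of_subset_left (Finset.erase_subset _ _) b3,
        fun i hi j hj hij => b4 i (Finset.mem_of_mem_erase hi) j (Finset.mem_of_mem_erase hj) hij,
        b5,
        fun i hi j hj => b6 i (Finset.mem_of_mem_erase hi) j hj, ?_⟩
      have hsum : (∑ i ∈ P, (F i : ℤ)) = (F m : ℤ) + ∑ i ∈ P.erase m, (F i : ℤ) :=
        (Finset.add_sum_erase P (fun i => (F i : ℤ)) hmP).symm
      rw [hN'def]
      linarith
    have heq := huniq' (P.erase m, M) herase
    have hPe : P.erase m = P' := congrArg Prod.fst heq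
    have hMe : M = M' := congrArg Prod.snd heq
    have hPeq : P = insert m P' := by
      rw [← hPe, Finset.insert_erase hmP]
    rw [Prod.mk.injEq]
    exact ⟨hPeq, hMe⟩

lemma zero_rep : IsFarDiff 0 (∅ : Finset ℕ) (∅ : Finset ℕ) := by
  refine ⟨?_, ?_, ?_, ?_, ?_, ?_, ?_⟩ <;> simp

lemma swap_eu {N : ℤ} (h : ∃! PM : Finset ℕ × Finset ℕ, IsFarDiff (-N) PM.1 PM.2) :
    ∃! PM : Finset ℕ × Finset ℕ, IsFarDiff N PM.1 PM.2 := by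
  obtain ⟨⟨P, M⟩, h1, h2⟩ := h
  simp only at h1 h2
  refine ⟨(M, P), ?_, ?_⟩
  · have := neg_swap h1
    rwa [neg_neg] at this
  · rintro ⟨P', M'⟩ hPM'
    simp only at hPM'
    have := h2 (M', P') (neg_swap hPM')
    rw [Prod.mk.injEq] at this ⊢
    exact ⟨this.2, this.1⟩

lemma all_unique (N : ℤ) : ∃! PM : Finset ℕ × Finset ℕ, IsFarDiff N PM.1 PM.2 := by
  have H : ∀ K : ℕ, ∀ N : ℤ, N.natAbs = K → ∃! PM : Finset ℕ × Finset ℕ, IsFarDiff N PM.1 PM.2 := by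
    intro K
    induction K using Nat.strong_induction_on with
    | _ K ih =>
      intro N hK
      have IH : ∀ N' : ℤ, N'.natAbs < N.natAbs →
          ∃! PM : Finset ℕ × Finset ℕ, IsFarDiff N' PM.1 PM.2 := by
        intro N' hlt
        exact ih N'.natAbs (hK ▸ hlt) N' rfl
      rcases lt_trichotomy N 0 with hneg | hzero | hpos
      · apply swap_eu
        apply pos_step (-N) (by linarith)
        intro N' hlt
        rw [Int.natAbs_neg] at hlt
        exact IH N' hlt
      · subst hzero
        refine ⟨(∅, ∅), zero_rep, ?_⟩
        rintro ⟨P, M⟩ hPM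
        simp only at hPM
        obtain ⟨he1, he2⟩ := zero_unique hPM
        rw [Prod.mk.injEq]
        exact ⟨he1, he2⟩
      · exact pos_step N hpos IH
  exact H N.natAbs N rfl

/-- Every integer has a unique far-difference representation; moreover, for
`n ≥ 1`, every integer `N` with `S (n-1) < N ≤ S n` has `n` as the largest
index of its representation, appearing with positive sign. -/
theorem far_difference_unique :
    (∀ N : ℤ, ∃! PM : Finset ℕ × Finset ℕ, IsFarDiff N PM.1 PM.2) ∧
    (∀ n : ℕ, 1 ≤ n → ∀ N : ℤ, (S (n - 1) : ℤ) < N → N ≤ (S n : ℤ) →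
      ∀ P M : Finset ℕ, IsFarDiff N P M →
        n ∈ P ∧ ∀ i ∈ P ∪ M, i ≤ n) := by
  refine ⟨all_unique, ?_⟩
  intro n hn N h1 h2 P M hPM
  have hS0 : (0:ℤ) ≤ (S (n-1) : ℤ) := by positivity
  have hNpos : 0 < N := by linarith
  obtain ⟨m, hmP, hmmax, hml, hmu⟩ := topSign hPM hNpos
  have hmn : m = n := n_det hml hmu h1 h2
  subst hmn
  exact ⟨hmP, hmmax⟩
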